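/- arXiv:1712.03436 — 6 statements merged into one kernel-verified Lean document; each statement's English description precedes it below -/
import Mathlib

section
/- Let A be a unital C*-algebra, let e ∈ A be a projection (e = e* = e²), and let δ : A → A be a self-adjoint derivation, i.e., a derivation satisfying δ(x*) = δ(x)* for all x ∈ A. If δ leaves eA(1−e) invariant (δ(eA(1−e)) ⊆ eA(1−e)), or if δ leaves (1−e)Ae invariant, then δ(e) = 0. -/
/-- Let `A` be a unital C*-algebra, `e ∈ A` a projection, and `δ : A → A`
a self-adjoint derivation.  If `δ` leaves `eA(1-e)` invariant, or if `δ` leaves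
`(1-e)Ae` invariant, then `δ(e) = 0`. -/
theorem stmt_4 {A : Type*} [CStarAlgebra A]
    (e : A) (heproj : e * e = e) (hestar : star e = e)
    (δ : A →ₗ[ℂ] A) (hder : ∀ x y : A, δ (x * y) = δ x * y + x * δ y)
    (hsa : ∀ x : A, δ (star x) = star (δ x))
    (hinv : (∀ x : A, ∃ y : A, δ (e * x * (1 - e)) = e * y * (1 - e)) ∨
      (∀ x : A, ∃ y : A, δ ((1 - e) * x * e) = (1 - e) * y * e)) :
    δ e = 0 := by
  have hδ1 : δ 1 = 0 := by
    have h := hder 1 1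
    simp only [mul_one, one_mul] at h
    exact (left_eq_add.mp h)
  have hδe_sa : star (δ e) = δ e := by
    rw [← hsa e, hestar]
  have hδsub : δ (1 - e) = - δ e := by rw [map_sub, hδ1, zero_sub]
  have h3 : (1 - e) * e = 0 := by rw [sub_mul, one_mul, heproj, sub_self]
  have h3' : e * (1 - e) = 0 := by rw [mul_sub, mul_one, heproj, sub_self]
  rcases hinv with h | h
  · -- δ leaves eA(1-e) invariant
    have key : ∀ x : A, e * x * δ e * e = 0 := by
      intro x
      obtain ⟨y, hy⟩ := h x
      have hy' : δ (e * x) * (1 - e) + (e * x) * δ (1 - e) = e * y * (1 - e) :=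
        (hder (e * x) (1 - e)).symm.trans hy
      have e1 := congrArg (fun z => z * e) hy'
      simp only [hδsub] at e1
      rw [show (e * y * (1 - e)) * e = 0 by rw [mul_assoc, h3, mul_zero],
        add_mul, mul_assoc (δ (e * x)) (1 - e) e, h3, mul_zero, zero_add,
        mul_neg, neg_mul, neg_eq_zero] at e1
      exact e1
    have h4 : star (δ e * e) * (δ e * e) = 0 := by
      have hk := key (star (δ e))
      rw [hδe_sa] at hk
      rw [star_mul, hestar, hδe_sa, ← mul_assoc]
      exact hk
    have h5 : δ e * e = 0 := (CStarRing.star_mul_self_eq_zero_iff _).mp h4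
    have h6 : e * δ e = 0 := by
      have := congrArg star h5
      rwa [star_mul, hδe_sa, hestar, star_zero] at this
    have hfin := hder e e
    rw [heproj, h5, h6, zero_add] at hfin
    exact hfin
  · -- δ leaves (1-e)Ae invariant
    have key : ∀ x : A, e * (δ e * (x * e)) = 0 := by
      intro x
      obtain ⟨y, hy⟩ := h x
      have hy' : δ ((1 - e) * (x * e)) = (1 - e) * y * e := by
        rw [← mul_assoc]; exact hy
      have e1 := congrArg (fun z => e * z) ((hder (1 - e) (x * e)).symm.trans hy')
      simp only [hδsub] at e1
      rw [mul_add, neg_mul, mul_neg, ← mul_assoc e (1 - e), h3', zero_mul, add_zero,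
        mul_assoc (1 - e) y e, ← mul_assoc e (1 - e), h3', zero_mul, neg_eq_zero] at e1
      exact e1
    have h4 : (e * δ e) * star (e * δ e) = 0 := by
      have hk := key (star (δ e))
      rw [hδe_sa] at hk
      rw [star_mul, hestar, hδe_sa, mul_assoc]
      exact hk
    have h5 : e * δ e = 0 := (CStarRing.mul_star_self_eq_zero_iff _).mp h4
    have h6 : δ e * e = 0 := by
      have := congrArg star h5
      rwa [star_mul, hδe_sa, hestar, star_zero] at this
    have hfin := hder e e
    rw [heproj, h5, h6, zero_add] at hfin
    exact hfin
end

section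
/- Let H and K be complex Hilbert spaces, let X be a TRO in B(K,H), and let D : X → X be a linear map satisfying D(x y* z) = D(x) y* z + x D(y)* z + x y* D(z) for all x, y, z ∈ X. If x₁, …, xₙ, y₁, …, yₙ ∈ X are finitely many elements with Σᵢ xᵢ yᵢ* = 0 in B(H), then Σᵢ ( D(xᵢ) yᵢ* + xᵢ D(yᵢ)* ) = 0 in B(H). -/
open ContinuousLinearMap

/-- Let `X` be a TRO in `B(K,H)` and let `D : X → X` be linear and satisfy the
TRO-derivation identity.  If `∑ i, xᵢ yᵢ* = 0` with all `xᵢ, yᵢ ∈ X`, then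
`∑ i, (D xᵢ) yᵢ* + xᵢ (D yᵢ)* = 0`. -/
theorem stmt_5 {H K : Type*}
    [NormedAddCommGroup H] [InnerProductSpace ℂ H] [CompleteSpace H]
    [NormedAddCommGroup K] [InnerProductSpace ℂ K] [CompleteSpace K]
    (X : Submodule ℂ (K →L[ℂ] H)) (hXclosed : IsClosed (X : Set (K →L[ℂ] H)))
    (hXtro : ∀ x ∈ X, ∀ y ∈ X, ∀ z ∈ X, x ∘L (adjoint y) ∘L z ∈ X)
    (D : (K →L[ℂ] H) →ₗ[ℂ] (K →L[ℂ] H))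
    (hDX : ∀ x ∈ X, D x ∈ X)
    (hder : ∀ x ∈ X, ∀ y ∈ X, ∀ z ∈ X,
      D (x ∘L (adjoint y) ∘L z) =
        D x ∘L (adjoint y) ∘L z + x ∘L (adjoint (D y)) ∘L z + x ∘L (adjoint y) ∘L D z)
    (n : ℕ) (x y : Fin n → (K →L[ℂ] H)) (hx : ∀ i, x i ∈ X) (hy : ∀ i, y i ∈ X)
    (hsum : ∑ i, x i ∘L adjoint (y i) = 0) :
    ∑ i, (D (x i) ∘L adjoint (y i) + x i ∘L adjoint (D (y i))) = 0 := by
  set A := ∑ i, (D (x i) ∘L adjoint (y i) + x i ∘L adjoint (D (y i))) with hA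
  -- Step 1: A kills every element of X (as an operator composition)
  have key : ∀ z ∈ X, A ∘L z = 0 := by
    intro z hz
    have h1 : A ∘L z = ∑ i,
        (D (x i) ∘L adjoint (y i) ∘L z + x i ∘L adjoint (D (y i)) ∘L z) := by
      rw [hA, finset_sum_comp]
      refine Finset.sum_congr rfl fun i _ => ?_
      rw [add_comp, comp_assoc, comp_assoc]
    have h2 : ∀ i : Fin n,
        D (x i) ∘L adjoint (y i) ∘L z + x i ∘L adjoint (D (y i)) ∘L z =
          D (x i ∘L adjoint (y i) ∘L z) - x i ∘L adjoint (y i) ∘L D z := by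
      intro i
      rw [hder (x i) (hx i) (y i) (hy i) z hz]
      abel
    rw [h1]
    simp_rw [fun i => h2 i]
    rw [Finset.sum_sub_distrib, ← map_sum]
    have h3 : (∑ i, x i ∘L adjoint (y i) ∘L z) = 0 := by
      have : (∑ i, x i ∘L adjoint (y i) ∘L z) =
          (∑ i, x i ∘L adjoint (y i)) ∘L z := by
        rw [finset_sum_comp]
        exact Finset.sum_congr rfl fun i _ => (comp_assoc _ _ _).symm
      rw [this, hsum, zero_comp]
    have h4 : (∑ i, x i ∘L adjoint (y i) ∘L D z) = 0 := by
      have : (∑ i, x i ∘L adjoint (y i) ∘L D z) =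
          (∑ i, x i ∘L adjoint (y i)) ∘L D z := by
        rw [finset_sum_comp]
        exact Finset.sum_congr rfl fun i _ => (comp_assoc _ _ _).symm
      rw [this, hsum, zero_comp]
    rw [h3, h4, map_zero, sub_zero]
  -- Step 2: A ∘ adjoint A = 0
  have hAadj : adjoint A = ∑ i,
      (y i ∘L adjoint (D (x i)) + D (y i) ∘L adjoint (x i)) := by
    rw [hA, map_sum]
    refine Finset.sum_congr rfl fun i _ => ?_
    rw [map_add, adjoint_comp, adjoint_comp, adjoint_adjoint, adjoint_adjoint]
  have hAAadj : A ∘L adjoint A = 0 := by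
    rw [hAadj, comp_finset_sum]
    refine Finset.sum_eq_zero fun i _ => ?_
    rw [comp_add, ← comp_assoc, ← comp_assoc, key (y i) (hy i),
      key (D (y i)) (hDX (y i) (hy i)), zero_comp, zero_comp, add_zero]
  -- Step 3: conclude A = 0
  have hB : adjoint A = 0 := by
    have hnorm : ‖adjoint (adjoint A) ∘L adjoint A‖ = ‖adjoint A‖ * ‖adjoint A‖ :=
      norm_adjoint_comp_self (adjoint A)
    rw [adjoint_adjoint, hAAadj, norm_zero] at hnorm
    exact norm_eq_zero.mp (mul_self_eq_zero.mp hnorm.symm)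
  have : A = 0 := by
    have := congrArg adjoint hB
    rwa [adjoint_adjoint, map_zero] at this
  exact this
end

section
/- Let H and K be complex Hilbert spaces, let X be a TRO in B(K,H), and let D be a TRO-derivation on X. Then for all finitely many elements x₁, …, xₙ, y₁, …, yₙ ∈ X, the inequality ‖Σᵢ ( xᵢ D(yᵢ)* + D(xᵢ) yᵢ* )‖ ≤ 2 ‖D‖ ‖Σᵢ xᵢ yᵢ*‖ holds, where ‖D‖ is the operator norm of D. -/
open ContinuousLinearMap

set_option maxHeartbeats 1000000 in
private lemma stmt6_le_opNorm {H K : Type*}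
    [NormedAddCommGroup H] [InnerProductSpace ℂ H] [CompleteSpace H]
    [NormedAddCommGroup K] [InnerProductSpace ℂ K] [CompleteSpace K]
    (X : Submodule ℂ (K →L[ℂ] H)) (D : X →L[ℂ] X) (z : X) :
    ‖D z‖ ≤ @Norm.norm (X →L[ℂ] X) (ContinuousLinearMap.hasOpNorm (𝕜 := ℂ) (𝕜₂ := ℂ) (E := X) (F := X)) D * ‖z‖ := by
  have := ContinuousLinearMap.le_opNorm (𝕜 := ℂ) (𝕜₂ := ℂ) (E := X) (F := X) D z
  exact this
set_option maxHeartbeats 1000000 in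
private lemma stmt6_opNorm_nonneg {H K : Type*}
    [NormedAddCommGroup H] [InnerProductSpace ℂ H] [CompleteSpace H]
    [NormedAddCommGroup K] [InnerProductSpace ℂ K] [CompleteSpace K]
    (X : Submodule ℂ (K →L[ℂ] H)) (D : X →L[ℂ] X) :
    0 ≤ @Norm.norm (X →L[ℂ] X) (ContinuousLinearMap.hasOpNorm (𝕜 := ℂ) (𝕜₂ := ℂ) (E := X) (F := X)) D := by
  have := ContinuousLinearMap.opNorm_nonneg (𝕜 := ℂ) (𝕜₂ := ℂ) (E := X) (F := X) D
  exact this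

section Aux

variable {H K : Type*}
    [NormedAddCommGroup H] [InnerProductSpace ℂ H] [CompleteSpace H]
    [NormedAddCommGroup K] [InnerProductSpace ℂ K] [CompleteSpace K]

set_option maxHeartbeats 1000000 in
/-- Key step: for a TRO-derivation `D`, finitely many `uᵢ, vᵢ ∈ X` and any `z ∈ X`,
the operator `(∑ᵢ (uᵢ (D vᵢ)* + (D uᵢ) vᵢ*)) ∘ z` lies in `X` and has norm at most
`2 ‖D‖ ‖∑ᵢ uᵢ vᵢ*‖ ‖z‖`. -/
private lemma stmt6_step (X : Submodule ℂ (K →L[ℂ] H))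
    (hXtro : ∀ x ∈ X, ∀ y ∈ X, ∀ z ∈ X, x ∘L (adjoint y) ∘L z ∈ X)
    (D : X →L[ℂ] X)
    (hder : ∀ x y z w : X,
      (w : K →L[ℂ] H) = (x : K →L[ℂ] H) ∘L (adjoint (y : K →L[ℂ] H)) ∘L (z : K →L[ℂ] H) →
      (D w : K →L[ℂ] H) =
        (D x : K →L[ℂ] H) ∘L (adjoint (y : K →L[ℂ] H)) ∘L (z : K →L[ℂ] H)
          + (x : K →L[ℂ] H) ∘L (adjoint (D y : K →L[ℂ] H)) ∘L (z : K →L[ℂ] H)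
          + (x : K →L[ℂ] H) ∘L (adjoint (y : K →L[ℂ] H)) ∘L (D z : K →L[ℂ] H))
    (n : ℕ) (u v : Fin n → X) (z : X) :
    ∃ w : X, (w : K →L[ℂ] H) =
        (∑ i, ((u i : K →L[ℂ] H) ∘L adjoint (D (v i) : K →L[ℂ] H)
          + (D (u i) : K →L[ℂ] H) ∘L adjoint (v i : K →L[ℂ] H))) ∘L (z : K →L[ℂ] H)
      ∧ ‖w‖ ≤ 2 * @Norm.norm (X →L[ℂ] X) (ContinuousLinearMap.hasOpNorm (𝕜 := ℂ) (𝕜₂ := ℂ) (E := X) (F := X)) D * ‖∑ i, (u i : K →L[ℂ] H) ∘L adjoint (v i : K →L[ℂ] H)‖ * ‖z‖ := by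
  set a : H →L[ℂ] H := ∑ i, (u i : K →L[ℂ] H) ∘L adjoint (v i : K →L[ℂ] H) with ha
  let azf : Fin n → X := fun i =>
    ⟨(u i : K →L[ℂ] H) ∘L adjoint (v i : K →L[ℂ] H) ∘L (z : K →L[ℂ] H),
      hXtro _ (u i).2 _ (v i).2 _ z.2⟩
  let aDzf : Fin n → X := fun i =>
    ⟨(u i : K →L[ℂ] H) ∘L adjoint (v i : K →L[ℂ] H) ∘L (D z : K →L[ℂ] H),
      hXtro _ (u i).2 _ (v i).2 _ (D z).2⟩
  have hD : (D (∑ i, azf i) : K →L[ℂ] H) = ∑ i, (D (azf i) : K →L[ℂ] H) := by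
    rw [map_sum]; exact Submodule.coe_sum X _ _
  have hDi : ∀ i, (D (azf i) : K →L[ℂ] H) =
      (D (u i) : K →L[ℂ] H) ∘L adjoint (v i : K →L[ℂ] H) ∘L (z : K →L[ℂ] H)
      + (u i : K →L[ℂ] H) ∘L adjoint (D (v i) : K →L[ℂ] H) ∘L (z : K →L[ℂ] H)
      + (u i : K →L[ℂ] H) ∘L adjoint (v i : K →L[ℂ] H) ∘L (D z : K →L[ℂ] H) := fun i =>
    hder (u i) (v i) z (azf i) rfl
  have hSz : ((∑ i, azf i : X) : K →L[ℂ] H) = a ∘L (z : K →L[ℂ] H) := by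
    rw [Submodule.coe_sum, ha, finset_sum_comp]
    exact Finset.sum_congr rfl fun i _ => (comp_assoc _ _ _).symm
  have hTz : ((∑ i, aDzf i : X) : K →L[ℂ] H) = a ∘L (D z : K →L[ℂ] H) := by
    rw [Submodule.coe_sum, ha, finset_sum_comp]
    exact Finset.sum_congr rfl fun i _ => (comp_assoc _ _ _).symm
  refine ⟨D (∑ i, azf i) - ∑ i, aDzf i, ?_, ?_⟩
  · have : ((D (∑ i, azf i) - ∑ i, aDzf i : X) : K →L[ℂ] H)
        = ∑ i, (D (azf i) : K →L[ℂ] H) - ∑ i, (aDzf i : K →L[ℂ] H) := by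
      push_cast [hD]
      rfl
    rw [this, finset_sum_comp, ← Finset.sum_sub_distrib]
    refine Finset.sum_congr rfl fun i _ => ?_
    rw [hDi i, add_comp, comp_assoc, comp_assoc]
    show _ - ((u i : K →L[ℂ] H) ∘L adjoint (v i : K →L[ℂ] H) ∘L (D z : K →L[ℂ] H)) = _
    abel
  · have h1 : ‖D (∑ i, azf i)‖ ≤ @Norm.norm (X →L[ℂ] X) (ContinuousLinearMap.hasOpNorm (𝕜 := ℂ) (𝕜₂ := ℂ) (E := X) (F := X)) D * (‖a‖ * ‖z‖) := by
      refine (stmt6_le_opNorm X D _).trans ?_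
      have : ‖(∑ i, azf i : X)‖ ≤ ‖a‖ * ‖z‖ := by
        show ‖((∑ i, azf i : X) : K →L[ℂ] H)‖ ≤ _
        rw [hSz]; exact opNorm_comp_le _ _
      exact mul_le_mul_of_nonneg_left this (stmt6_opNorm_nonneg X D)
    have h2 : ‖(∑ i, aDzf i : X)‖ ≤ ‖a‖ * (@Norm.norm (X →L[ℂ] X) (ContinuousLinearMap.hasOpNorm (𝕜 := ℂ) (𝕜₂ := ℂ) (E := X) (F := X)) D * ‖z‖) := by
      show ‖((∑ i, aDzf i : X) : K →L[ℂ] H)‖ ≤ _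
      rw [hTz]
      refine (opNorm_comp_le _ _).trans ?_
      exact mul_le_mul_of_nonneg_left (stmt6_le_opNorm X D z) (norm_nonneg a)
    calc ‖D (∑ i, azf i) - ∑ i, aDzf i‖ ≤ ‖D (∑ i, azf i)‖ + ‖(∑ i, aDzf i : X)‖ :=
          norm_sub_le _ _
      _ ≤ @Norm.norm (X →L[ℂ] X) (ContinuousLinearMap.hasOpNorm (𝕜 := ℂ) (𝕜₂ := ℂ) (E := X) (F := X)) D * (‖a‖ * ‖z‖) + ‖a‖ * (@Norm.norm (X →L[ℂ] X) (ContinuousLinearMap.hasOpNorm (𝕜 := ℂ) (𝕜₂ := ℂ) (E := X) (F := X)) D * ‖z‖) := add_le_add h1 h2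
      _ = 2 * @Norm.norm (X →L[ℂ] X) (ContinuousLinearMap.hasOpNorm (𝕜 := ℂ) (𝕜₂ := ℂ) (E := X) (F := X)) D * ‖a‖ * ‖z‖ := by ring

end Aux

set_option maxHeartbeats 1000000 in
/-- Let `X` be a TRO in `B(K,H)` and `D` a TRO-derivation on `X`.  Then for all
finitely many `xᵢ, yᵢ ∈ X` one has `‖∑ᵢ (xᵢ (D yᵢ)* + (D xᵢ) yᵢ*)‖ ≤ 2 ‖D‖ ‖∑ᵢ xᵢ yᵢ*‖`. -/
theorem stmt_6 {H K : Type*}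
    [NormedAddCommGroup H] [InnerProductSpace ℂ H] [CompleteSpace H]
    [NormedAddCommGroup K] [InnerProductSpace ℂ K] [CompleteSpace K]
    (X : Submodule ℂ (K →L[ℂ] H)) (hXclosed : IsClosed (X : Set (K →L[ℂ] H)))
    (hXtro : ∀ x ∈ X, ∀ y ∈ X, ∀ z ∈ X, x ∘L (adjoint y) ∘L z ∈ X)
    (D : X →L[ℂ] X)
    (hder : ∀ x y z w : X,
      (w : K →L[ℂ] H) = (x : K →L[ℂ] H) ∘L (adjoint (y : K →L[ℂ] H)) ∘L (z : K →L[ℂ] H) →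
      (D w : K →L[ℂ] H) =
        (D x : K →L[ℂ] H) ∘L (adjoint (y : K →L[ℂ] H)) ∘L (z : K →L[ℂ] H)
          + (x : K →L[ℂ] H) ∘L (adjoint (D y : K →L[ℂ] H)) ∘L (z : K →L[ℂ] H)
          + (x : K →L[ℂ] H) ∘L (adjoint (y : K →L[ℂ] H)) ∘L (D z : K →L[ℂ] H))
    (n : ℕ) (x y : Fin n → X) :
    ‖∑ i, ((x i : K →L[ℂ] H) ∘L adjoint (D (y i) : K →L[ℂ] H)
        + (D (x i) : K →L[ℂ] H) ∘L adjoint (y i : K →L[ℂ] H))‖ ≤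
      2 * @Norm.norm (X →L[ℂ] X) (ContinuousLinearMap.hasOpNorm (𝕜 := ℂ) (𝕜₂ := ℂ) (E := X) (F := X)) D * ‖∑ i, (x i : K →L[ℂ] H) ∘L adjoint (y i : K →L[ℂ] H)‖ := by
  classical
  set d : H →L[ℂ] H := ∑ i, ((x i : K →L[ℂ] H) ∘L adjoint (D (y i) : K →L[ℂ] H)
      + (D (x i) : K →L[ℂ] H) ∘L adjoint (y i : K →L[ℂ] H)) with hd
  set a : H →L[ℂ] H := ∑ i, (x i : K →L[ℂ] H) ∘L adjoint (y i : K →L[ℂ] H) with ha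
  set C : ℝ := 2 * @Norm.norm (X →L[ℂ] X) (ContinuousLinearMap.hasOpNorm (𝕜 := ℂ) (𝕜₂ := ℂ) (E := X) (F := X)) D * ‖a‖ with hC
  have hC0 : 0 ≤ C := mul_nonneg (mul_nonneg zero_le_two (stmt6_opNorm_nonneg X D)) (norm_nonneg _)
  have hstep1 : ∀ z : X, ∃ w : X, (w : K →L[ℂ] H) = d ∘L (z : K →L[ℂ] H) ∧ ‖w‖ ≤ C * ‖z‖ :=
    fun z => stmt6_step X hXtro D hder n x y z
  have hadj : adjoint d = ∑ i, ((y i : K →L[ℂ] H) ∘L adjoint (D (x i) : K →L[ℂ] H)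
      + (D (y i) : K →L[ℂ] H) ∘L adjoint (x i : K →L[ℂ] H)) := by
    rw [hd, map_sum]
    refine Finset.sum_congr rfl fun i _ => ?_
    rw [map_add, adjoint_comp, adjoint_comp, adjoint_adjoint, adjoint_adjoint]
    exact add_comm _ _
  have hanorm : ‖∑ i, (y i : K →L[ℂ] H) ∘L adjoint (x i : K →L[ℂ] H)‖ = ‖a‖ := by
    have h : ∑ i, (y i : K →L[ℂ] H) ∘L adjoint (x i : K →L[ℂ] H) = adjoint a := by
      rw [ha, map_sum]
      refine Finset.sum_congr rfl fun i _ => ?_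
      rw [adjoint_comp, adjoint_adjoint]
    rw [h, adjoint.norm_map]
  have hstep2 : ∀ z : X, ∃ w : X,
      (w : K →L[ℂ] H) = adjoint d ∘L (z : K →L[ℂ] H) ∧ ‖w‖ ≤ C * ‖z‖ := by
    intro z
    obtain ⟨w, hw, hwn⟩ := stmt6_step X hXtro D hder n y x z
    rw [hanorm] at hwn
    exact ⟨w, by rw [hadj]; exact hw, hwn⟩
  set c : H →L[ℂ] H := adjoint d * d with hc
  have hck : ∀ m : ℕ, ∀ z : X, ∃ w : X, (w : K →L[ℂ] H) = (c ^ m) ∘L (z : K →L[ℂ] H)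
      ∧ ‖w‖ ≤ C ^ (2 * m) * ‖z‖ := by
    intro m
    induction m with
    | zero => exact fun z => ⟨z, by simp [one_def], by simp⟩
    | succ m ih =>
      intro z
      obtain ⟨w1, hw1, hw1n⟩ := hstep1 z
      obtain ⟨w2, hw2, hw2n⟩ := hstep2 w1
      obtain ⟨w, hw, hwn⟩ := ih w2
      refine ⟨w, ?_, ?_⟩
      · rw [hw, hw2, hw1, pow_succ, mul_def, comp_assoc, hc, mul_def, comp_assoc]
      · calc ‖w‖ ≤ C ^ (2 * m) * ‖w2‖ := hwn
          _ ≤ C ^ (2 * m) * (C * ‖w1‖) :=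
            mul_le_mul_of_nonneg_left hw2n (pow_nonneg hC0 _)
          _ ≤ C ^ (2 * m) * (C * (C * ‖z‖)) := by
            refine mul_le_mul_of_nonneg_left ?_ (pow_nonneg hC0 _)
            exact mul_le_mul_of_nonneg_left hw1n hC0
          _ = C ^ (2 * (m + 1)) * ‖z‖ := by ring
  -- combined step: `c^m ∘ d* ∘ z ∈ X` with norm at most `C^(2m+1) ‖z‖`
  have hck' : ∀ m : ℕ, ∀ z : X, ∃ w : X,
      (w : K →L[ℂ] H) = (c ^ m) ∘L (adjoint d ∘L (z : K →L[ℂ] H))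
      ∧ ‖w‖ ≤ C ^ (2 * m + 1) * ‖z‖ := by
    intro m z
    obtain ⟨w2, hw2, hw2n⟩ := hstep2 z
    obtain ⟨w, hw, hwn⟩ := hck m w2
    refine ⟨w, by rw [hw, hw2], ?_⟩
    calc ‖w‖ ≤ C ^ (2 * m) * ‖w2‖ := hwn
      _ ≤ C ^ (2 * m) * (C * ‖z‖) := mul_le_mul_of_nonneg_left hw2n (pow_nonneg hC0 _)
      _ = C ^ (2 * m + 1) * ‖z‖ := by ring
  set M : ℝ := ∑ i, (‖x i‖ * ‖D (y i)‖ + ‖D (x i)‖ * ‖y i‖) with hM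
  have hbound : ∀ m : ℕ, ‖c ^ (m + 1)‖ ≤ C ^ (2 * m + 1) * M := by
    intro m
    have hexp : c ^ (m + 1) = ∑ i,
        (((c ^ m) ∘L (adjoint d ∘L (x i : K →L[ℂ] H))) ∘L adjoint (D (y i) : K →L[ℂ] H)
        + ((c ^ m) ∘L (adjoint d ∘L (D (x i) : K →L[ℂ] H))) ∘L adjoint (y i : K →L[ℂ] H)) := by
      have : c ^ (m + 1) = ((c ^ m) ∘L adjoint d) ∘L d := by
        rw [pow_succ, mul_def, hc, mul_def, comp_assoc]
      rw [this, hd, comp_finset_sum]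
      refine Finset.sum_congr rfl fun i _ => ?_
      rw [comp_add]
      congr 1 <;> rw [← comp_assoc, ← comp_assoc, comp_assoc (c ^ m)]
    rw [hexp]
    refine (norm_sum_le _ _).trans ?_
    have hterm : ∀ i : Fin n,
        ‖((c ^ m) ∘L (adjoint d ∘L (x i : K →L[ℂ] H))) ∘L adjoint (D (y i) : K →L[ℂ] H)
          + ((c ^ m) ∘L (adjoint d ∘L (D (x i) : K →L[ℂ] H))) ∘L adjoint (y i : K →L[ℂ] H)‖
        ≤ C ^ (2 * m + 1) * (‖x i‖ * ‖D (y i)‖ + ‖D (x i)‖ * ‖y i‖) := by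
      intro i
      obtain ⟨w1, hw1, hw1n⟩ := hck' m (x i)
      obtain ⟨w2, hw2, hw2n⟩ := hck' m (D (x i))
      refine (norm_add_le _ _).trans ?_
      have t1 : ‖((c ^ m) ∘L (adjoint d ∘L (x i : K →L[ℂ] H)))
          ∘L adjoint (D (y i) : K →L[ℂ] H)‖ ≤ (C ^ (2 * m + 1) * ‖x i‖) * ‖D (y i)‖ := by
        rw [← hw1]
        refine (opNorm_comp_le _ _).trans ?_
        rw [adjoint.norm_map]
        exact mul_le_mul_of_nonneg_right hw1n (norm_nonneg _)
      have t2 : ‖((c ^ m) ∘L (adjoint d ∘L (D (x i) : K →L[ℂ] H)))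
          ∘L adjoint (y i : K →L[ℂ] H)‖ ≤ (C ^ (2 * m + 1) * ‖D (x i)‖) * ‖y i‖ := by
        rw [← hw2]
        refine (opNorm_comp_le _ _).trans ?_
        rw [adjoint.norm_map]
        exact mul_le_mul_of_nonneg_right hw2n (norm_nonneg _)
      calc _ ≤ (C ^ (2 * m + 1) * ‖x i‖) * ‖D (y i)‖ + (C ^ (2 * m + 1) * ‖D (x i)‖) * ‖y i‖ :=
            add_le_add t1 t2
        _ = C ^ (2 * m + 1) * (‖x i‖ * ‖D (y i)‖ + ‖D (x i)‖ * ‖y i‖) := by ring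
    calc (∑ i, ‖((c ^ m) ∘L (adjoint d ∘L (x i : K →L[ℂ] H))) ∘L adjoint (D (y i) : K →L[ℂ] H)
          + ((c ^ m) ∘L (adjoint d ∘L (D (x i) : K →L[ℂ] H))) ∘L adjoint (y i : K →L[ℂ] H)‖)
        ≤ ∑ i, C ^ (2 * m + 1) * (‖x i‖ * ‖D (y i)‖ + ‖D (x i)‖ * ‖y i‖) :=
          Finset.sum_le_sum fun i _ => hterm i
      _ = C ^ (2 * m + 1) * M := by rw [hM, Finset.mul_sum]
  have hcsa : IsSelfAdjoint c := by
    rw [hc, ← star_eq_adjoint]; exact IsSelfAdjoint.star_mul_self d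
  have hcpow : ∀ k : ℕ, ‖c ^ (2 ^ k)‖ = ‖c‖ ^ (2 ^ k) := by
    intro k
    have h := hcsa.nnnorm_pow_two_pow k
    calc ‖c ^ 2 ^ k‖ = ((‖c ^ 2 ^ k‖₊ : NNReal) : ℝ) := rfl
      _ = ((‖c‖₊ ^ 2 ^ k : NNReal) : ℝ) := by rw [h]
      _ = ‖c‖ ^ 2 ^ k := by push_cast; rfl
  have hcn : ‖c‖ = ‖d‖ * ‖d‖ := by rw [hc, mul_def]; exact norm_adjoint_comp_self d
  have key : ∀ k : ℕ, (‖d‖ * ‖d‖) ^ (2 ^ k) ≤ C ^ (2 * 2 ^ k - 1) * M := by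
    intro k
    have h2 : 1 ≤ 2 ^ k := Nat.one_le_two_pow
    have hb := hbound (2 ^ k - 1)
    have harith1 : 2 ^ k - 1 + 1 = 2 ^ k := by omega
    have harith2 : 2 * (2 ^ k - 1) + 1 = 2 * 2 ^ k - 1 := by omega
    rw [harith1, harith2] at hb
    calc (‖d‖ * ‖d‖) ^ (2 ^ k) = ‖c‖ ^ (2 ^ k) := by rw [hcn]
      _ = ‖c ^ (2 ^ k)‖ := (hcpow k).symm
      _ ≤ C ^ (2 * 2 ^ k - 1) * M := hb
  show ‖d‖ ≤ C
  by_contra hlt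
  push_neg at hlt
  have hd0 : 0 < ‖d‖ := lt_of_le_of_lt hC0 hlt
  rcases eq_or_lt_of_le hC0 with hCz | hCp
  · have h0 := key 0
    rw [← hCz] at h0
    norm_num at h0
    nlinarith
  · set r : ℝ := ‖d‖ / C with hr
    have hr1 : 1 < r := (one_lt_div hCp).mpr hlt
    obtain ⟨m0, hm0⟩ := pow_unbounded_of_one_lt (M / ‖d‖) hr1
    set e : ℕ := 2 * 2 ^ m0 - 1 with he
    have h2 : 1 ≤ 2 ^ m0 := Nat.one_le_two_pow
    have hm0e : m0 ≤ e := by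
      have := Nat.lt_two_pow_self (n := m0)
      omega
    have hre : r ^ m0 ≤ r ^ e := pow_le_pow_right₀ hr1.le hm0e
    have hM' : M < r ^ e * ‖d‖ := by
      have h1 : M < r ^ m0 * ‖d‖ := (div_lt_iff₀ hd0).mp hm0
      exact h1.trans_le (mul_le_mul_of_nonneg_right hre hd0.le)
    have hkey := key m0
    have heq : (‖d‖ * ‖d‖) ^ (2 ^ m0) = ‖d‖ ^ e * ‖d‖ := by
      have hsum : 2 * 2 ^ m0 = e + 1 := by omega
      calc (‖d‖ * ‖d‖) ^ (2 ^ m0) = (‖d‖ ^ 2) ^ (2 ^ m0) := by rw [sq]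
        _ = ‖d‖ ^ (2 * 2 ^ m0) := by rw [← pow_mul]
        _ = ‖d‖ ^ (e + 1) := by rw [hsum]
        _ = ‖d‖ ^ e * ‖d‖ := pow_succ _ _
    have hCr : C * r = ‖d‖ := by
      rw [hr, mul_comm, div_mul_cancel₀ _ hCp.ne']
    have hfinal : C ^ e * M < ‖d‖ ^ e * ‖d‖ := by
      calc C ^ e * M < C ^ e * (r ^ e * ‖d‖) :=
            mul_lt_mul_of_pos_left hM' (pow_pos hCp e)
        _ = (C * r) ^ e * ‖d‖ := by rw [mul_pow C r e, mul_assoc]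
        _ = ‖d‖ ^ e * ‖d‖ := by rw [hCr]
    rw [heq, he] at hkey
    exact absurd (hkey.trans_lt hfinal) (lt_irrefl _).elim
end

section
/- Let A be a unital complex *-algebra and let δ : A → A be a linear map satisfying δ({a b c}) = {δ(a) b c} + {a δ(b) c} + {a b δ(c)} for all a, b, c ∈ A, where {a b c} = (a b* c + c b* a)/2. Then δ(1)* = −δ(1). Moreover, if δ(1) = 0, then δ is a Jordan *-derivation: δ(x ∘ y) = δ(x) ∘ y + x ∘ δ(y) and δ(x*) = δ(x)* for all x, y ∈ A, where x ∘ y = (xy + yx)/2. -/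
/-- The Jordan triple product `{a b c} = (a b* c + c b* a)/2` on a complex *-algebra. -/
noncomputable def tripleProd {A : Type*} [NonUnitalRing A] [Module ℂ A] [Star A]
    (a b c : A) : A :=
  (2⁻¹ : ℂ) • (a * star b * c + c * star b * a)

/-- The Jordan product `x ∘ y = (xy + yx)/2` on a complex algebra. -/
noncomputable def jordanProd {A : Type*} [NonUnitalRing A] [Module ℂ A] (x y : A) : A :=
  (2⁻¹ : ℂ) • (x * y + y * x)

/-- If `δ` is a linear triple derivation on a unital complex *-algebra, then
`δ(1)* = -δ(1)`; moreover, if `δ(1) = 0`, then `δ` is a Jordan *-derivation. -/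
theorem stmt_14 {A : Type*} [Ring A] [Algebra ℂ A] [StarRing A] [StarModule ℂ A]
    (δ : A →ₗ[ℂ] A)
    (hder : ∀ a b c : A,
      δ (tripleProd a b c) =
        tripleProd (δ a) b c + tripleProd a (δ b) c + tripleProd a b (δ c)) :
    star (δ 1) = -δ 1 ∧
    (δ 1 = 0 →
      (∀ x y : A, δ (jordanProd x y) = jordanProd (δ x) y + jordanProd x (δ y)) ∧
      (∀ x : A, δ (star x) = star (δ x))) := by
  constructor
  · have key := hder 1 1 1
    simp only [tripleProd, star_one, mul_one, one_mul, map_smul, map_add] at key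
    linear_combination (norm := module) -key
  · intro h1
    constructor
    · intro x y
      have key := hder x 1 y
      simp only [tripleProd, star_one, mul_one, one_mul, h1, mul_zero, zero_mul,
        add_zero, zero_add, smul_zero] at key
      simpa [jordanProd] using key
    · intro x
      have key := hder 1 x 1
      have hx : tripleProd 1 x 1 = star x := by
        simp [tripleProd]
        module
      rw [hx] at key
      simp only [tripleProd, star_one, mul_one, one_mul, h1, mul_zero, zero_mul,
        add_zero, zero_add, smul_zero] at key
      -- key : δ (star x) = 2⁻¹ • (star (δ x) + star (δ x))
      rw [key]
      module
end

section
/- Let H be a nonzero finite-dimensional complex Hilbert space and let p ∈ B(H) be an orthogonal projection (p = p* = p²). Then every TRO-derivation of the TRO X = pB(H) = {p x : x ∈ B(H)} is an inner TRO-derivation. -/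
set_option linter.unusedSectionVars false

open scoped InnerProductSpace

section s16aux

variable {H : Type*} [NormedAddCommGroup H] [InnerProductSpace ℂ H] [CompleteSpace H]

/-- rank-one operator `η ↦ ⟪ζ, η⟫ • ξ`. -/
noncomputable def s16rk (ξ ζ : H) : H →L[ℂ] H := (innerSL ℂ ζ).smulRight ξ

lemma s16rk_apply (ξ ζ η : H) : s16rk ξ ζ η = ⟪ζ, η⟫_ℂ • ξ := rfl

lemma s16mul_rk (a : H →L[ℂ] H) (ξ ζ : H) : a * s16rk ξ ζ = s16rk (a ξ) ζ := by
  ext η; simp [s16rk_apply, ContinuousLinearMap.mul_apply, map_smul]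

lemma s16rk_mul (a : H →L[ℂ] H) (ξ ζ : H) :
    s16rk ξ ζ * a = s16rk ξ (ContinuousLinearMap.adjoint a ζ) := by
  ext η
  simp [s16rk_apply, ContinuousLinearMap.mul_apply, ContinuousLinearMap.adjoint_inner_left]

lemma s16star_rk (ξ ζ : H) : star (s16rk ξ ζ) = s16rk ζ ξ := by
  rw [ContinuousLinearMap.star_eq_adjoint]
  refine ContinuousLinearMap.ext fun η => ?_
  refine ext_inner_right ℂ fun μ => ?_
  rw [ContinuousLinearMap.adjoint_inner_left]
  simp [s16rk_apply, inner_smul_left, inner_smul_right, mul_comm]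

lemma s16rk_comp (ξ ζ ξ' ζ' : H) : s16rk ξ ζ * s16rk ξ' ζ' = ⟪ζ, ξ'⟫_ℂ • s16rk ξ ζ' := by
  ext η; simp [s16rk_apply, ContinuousLinearMap.mul_apply, smul_smul, mul_comm]

lemma s16rk_smul_left (c : ℂ) (ξ ζ : H) : s16rk (c • ξ) ζ = c • s16rk ξ ζ := by
  ext η; simp [s16rk_apply, smul_smul, mul_comm]

lemma s16rk_sum_left {ι : Type*} (s : Finset ι) (v : ι → H) (ζ : H) :
    s16rk (∑ i ∈ s, v i) ζ = ∑ i ∈ s, s16rk (v i) ζ := by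
  ext η; simp [s16rk_apply, Finset.smul_sum]

lemma s16rk_smul_right (c : ℂ) (ξ ζ : H) :
    s16rk ξ (c • ζ) = (starRingEnd ℂ) c • s16rk ξ ζ := by
  ext η; simp [s16rk_apply, inner_smul_left, smul_smul, mul_comm]

lemma s16rk_sum_right {ι : Type*} (s : Finset ι) (v : ι → H) (c : ι → ℂ) (ξ : H) :
    s16rk ξ (∑ i ∈ s, c i • v i) = ∑ i ∈ s, (starRingEnd ℂ) (c i) • s16rk ξ (v i) := by
  ext η; simp [s16rk_apply, sum_inner, inner_smul_left, Finset.sum_smul, smul_smul, mul_comm]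

lemma s16sum_rk_one [FiniteDimensional ℂ H] {ι : Type*} [Fintype ι]
    (b : OrthonormalBasis ι ℂ H) : ∑ i, s16rk (b i) (b i) = 1 := by
  ext η
  simp only [ContinuousLinearMap.sum_apply, s16rk_apply, ContinuousLinearMap.one_apply]
  exact b.sum_repr' η

variable {p : H →L[ℂ] H} {X : Submodule ℂ (H →L[ℂ] H)}

/-- the TRO-derivation property -/
def s16IsTD (X : Submodule ℂ (H →L[ℂ] H)) (D : X →L[ℂ] X) : Prop :=
  ∀ x y z w : X,
      (w : H →L[ℂ] H) = (x : H →L[ℂ] H) * star (y : H →L[ℂ] H) * (z : H →L[ℂ] H) →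
      (D w : H →L[ℂ] H) =
        (D x : H →L[ℂ] H) * star (y : H →L[ℂ] H) * (z : H →L[ℂ] H)
          + (x : H →L[ℂ] H) * star (D y : H →L[ℂ] H) * (z : H →L[ℂ] H)
          + (x : H →L[ℂ] H) * star (y : H →L[ℂ] H) * (D z : H →L[ℂ] H)

/-- right multiplication inside `X` -/
def s16mulX (hmul : ∀ (x : X) (u : H →L[ℂ] H), (x : H →L[ℂ] H) * u ∈ X)
    (x : X) (u : H →L[ℂ] H) : X := ⟨(x : H →L[ℂ] H) * u, hmul x u⟩

@[simp] lemma s16coe_mulX (hmul : ∀ (x : X) (u : H →L[ℂ] H), (x : H →L[ℂ] H) * u ∈ X)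
    (x : X) (u : H →L[ℂ] H) : (s16mulX hmul x u : H →L[ℂ] H) = (x : H →L[ℂ] H) * u := rfl

/-- Step A : null sums of products have null derived sums -/
lemma s16stepA {ι : Type*} [Fintype ι] (el : ι → X)
    (hsum : ∑ i, star (el i : H →L[ℂ] H) * (el i : H →L[ℂ] H) = 1)
    (D : X →L[ℂ] X) (hder : s16IsTD X D)
    (hmul : ∀ (x : X) (u : H →L[ℂ] H), (x : H →L[ℂ] H) * u ∈ X)
    {κ : Type*} [Fintype κ] (x y : κ → X)
    (h0 : ∑ j, star (x j : H →L[ℂ] H) * (y j : H →L[ℂ] H) = 0) :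
    ∑ j, (star ((D (x j)) : H →L[ℂ] H) * (y j : H →L[ℂ] H)
      + star (x j : H →L[ℂ] H) * ((D (y j)) : H →L[ℂ] H)) = 0 := by
  set T : H →L[ℂ] H := ∑ j, (star ((D (x j)) : H →L[ℂ] H) * (y j : H →L[ℂ] H)
      + star (x j : H →L[ℂ] H) * ((D (y j)) : H →L[ℂ] H)) with hT
  have key : ∀ a : X, (a : H →L[ℂ] H) * T = 0 := by
    intro a
    have hw : ∀ j, ((a : H →L[ℂ] H) * star (x j : H →L[ℂ] H) * (y j : H →L[ℂ] H)) ∈ X := by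
      intro j
      simpa [mul_assoc] using hmul a (star (x j : H →L[ℂ] H) * (y j : H →L[ℂ] H))
    set w : κ → X := fun j => ⟨_, hw j⟩ with hwdef
    have hwsum : (∑ j, w j) = 0 := by
      have : ((∑ j, w j : X) : H →L[ℂ] H) = 0 := by
        push_cast [hwdef]
        simp only [mul_assoc, ← Finset.mul_sum]
        rw [h0, mul_zero]
      exact_mod_cast Submodule.coe_eq_zero.mp this
    have hD0 : ∑ j, ((D (w j)) : H →L[ℂ] H) = 0 := by
      have : (D (∑ j, w j) : H →L[ℂ] H) = 0 := by rw [hwsum, map_zero]; rfl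
      rw [map_sum] at this
      simpa using this
    have hDw : ∀ j, ((D (w j)) : H →L[ℂ] H) =
        ((D a) : H →L[ℂ] H) * star (x j : H →L[ℂ] H) * (y j : H →L[ℂ] H)
        + (a : H →L[ℂ] H) * star ((D (x j)) : H →L[ℂ] H) * (y j : H →L[ℂ] H)
        + (a : H →L[ℂ] H) * star (x j : H →L[ℂ] H) * ((D (y j)) : H →L[ℂ] H) := by
      intro j
      exact hder a (x j) (y j) (w j) rfl
    have h1 : ∑ j, ((D a) : H →L[ℂ] H) * star (x j : H →L[ℂ] H) * (y j : H →L[ℂ] H) = 0 := by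
      simp only [mul_assoc, ← Finset.mul_sum]
      rw [h0, mul_zero]
    calc (a : H →L[ℂ] H) * T
        = ∑ j, ((a : H →L[ℂ] H) * star ((D (x j)) : H →L[ℂ] H) * (y j : H →L[ℂ] H)
          + (a : H →L[ℂ] H) * star (x j : H →L[ℂ] H) * ((D (y j)) : H →L[ℂ] H)) := by
          rw [hT, Finset.mul_sum]
          simp [mul_add, mul_assoc]
      _ = ∑ j, ((D (w j)) : H →L[ℂ] H)
          - ∑ j, ((D a) : H →L[ℂ] H) * star (x j : H →L[ℂ] H) * (y j : H →L[ℂ] H) := by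
          rw [← Finset.sum_sub_distrib]
          refine Finset.sum_congr rfl fun j _ => ?_
          rw [hDw j]; abel
      _ = 0 := by rw [hD0, h1, sub_zero]
  calc T = 1 * T := (one_mul T).symm
    _ = ∑ i, star (el i : H →L[ℂ] H) * ((el i : H →L[ℂ] H) * T) := by
        rw [← hsum, Finset.sum_mul]; simp [mul_assoc]
    _ = 0 := by simp [key]


section withD

variable {ι : Type*} [Fintype ι] (el : ι → X)
  (D : X →L[ℂ] X)
  (hmul : ∀ (x : X) (u : H →L[ℂ] H), (x : H →L[ℂ] H) * u ∈ X)

/-- the induced derivation on B(H) -/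
noncomputable def s16delta (u : H →L[ℂ] H) : H →L[ℂ] H :=
  ∑ i, (star ((D (el i)) : H →L[ℂ] H) * ((el i : H →L[ℂ] H) * u)
    + star (el i : H →L[ℂ] H) * ((D (s16mulX hmul (el i) u)) : H →L[ℂ] H))

lemma s16delta_add (u v : H →L[ℂ] H) :
    s16delta el D hmul (u + v) = s16delta el D hmul u + s16delta el D hmul v := by
  unfold s16delta
  rw [← Finset.sum_add_distrib]
  refine Finset.sum_congr rfl fun i _ => ?_
  have : s16mulX hmul (el i) (u + v) = s16mulX hmul (el i) u + s16mulX hmul (el i) v :=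
    Subtype.ext (by simp [mul_add])
  rw [this, map_add]
  push_cast
  simp only [mul_add]
  abel

lemma s16delta_smul (c : ℂ) (u : H →L[ℂ] H) :
    s16delta el D hmul (c • u) = c • s16delta el D hmul u := by
  unfold s16delta
  rw [Finset.smul_sum]
  refine Finset.sum_congr rfl fun i _ => ?_
  have : s16mulX hmul (el i) (c • u) = c • s16mulX hmul (el i) u :=
    Subtype.ext (by simp [mul_smul_comm])
  rw [this, map_smul]
  push_cast
  simp only [mul_smul_comm, smul_add]

/-- bundled linear version -/
noncomputable def s16deltaL : (H →L[ℂ] H) →ₗ[ℂ] (H →L[ℂ] H) where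
  toFun := s16delta el D hmul
  map_add' := s16delta_add el D hmul
  map_smul' := s16delta_smul el D hmul

lemma s16deltaL_apply (u : H →L[ℂ] H) : s16deltaL el D hmul u = s16delta el D hmul u := rfl

lemma s16hsum1 (hsum : ∑ i, star (el i : H →L[ℂ] H) * (el i : H →L[ℂ] H) = 1)
    (u : H →L[ℂ] H) :
    ∑ i, star (el i : H →L[ℂ] H) * ((el i : H →L[ℂ] H) * u) = u := by
  simp only [← mul_assoc, ← Finset.sum_mul, hsum, one_mul]

/-- Step B'' : computation of `δ` on any decomposition -/
lemma s16B (hsum : ∑ i, star (el i : H →L[ℂ] H) * (el i : H →L[ℂ] H) = 1)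
    (hder : s16IsTD X D)
    {κ : Type*} [Fintype κ] (x y : κ → X) (u : H →L[ℂ] H)
    (h : ∑ j, star (x j : H →L[ℂ] H) * (y j : H →L[ℂ] H) = u) :
    s16delta el D hmul u
      = ∑ j, (star ((D (x j)) : H →L[ℂ] H) * (y j : H →L[ℂ] H)
        + star (x j : H →L[ℂ] H) * ((D (y j)) : H →L[ℂ] H)) := by
  have h0 : ∑ jj : ι ⊕ κ,
      star ((Sum.elim (fun i => el i) x jj : X) : H →L[ℂ] H)
        * ((Sum.elim (fun i => s16mulX hmul (el i) u) (fun j => -(y j)) jj : X) : H →L[ℂ] H)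
      = 0 := by
    rw [Fintype.sum_sum_type]
    simp only [Sum.elim_inl, Sum.elim_inr, s16coe_mulX]
    rw [s16hsum1 el hsum u]
    push_cast
    simp only [mul_neg, Finset.sum_neg_distrib, h]
    abel
  have := s16stepA el hsum D hder hmul _ _ h0
  rw [Fintype.sum_sum_type] at this
  simp only [Sum.elim_inl, Sum.elim_inr] at this
  have heq : ∀ j : κ,
      star ((D (x j)) : H →L[ℂ] H) * ((-(y j) : X) : H →L[ℂ] H)
        + star (x j : H →L[ℂ] H) * ((D (-(y j))) : H →L[ℂ] H)
      = -(star ((D (x j)) : H →L[ℂ] H) * (y j : H →L[ℂ] H)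
        + star (x j : H →L[ℂ] H) * ((D (y j)) : H →L[ℂ] H)) := by
    intro j
    rw [map_neg]
    push_cast
    rw [mul_neg, mul_neg]
    abel
  rw [Finset.sum_congr rfl (fun j _ => heq j)] at this
  rw [Finset.sum_neg_distrib] at this
  simp only [s16coe_mulX] at this
  show (∑ i, (star ((D (el i)) : H →L[ℂ] H) * ((el i : H →L[ℂ] H) * u)
    + star (el i : H →L[ℂ] H) * ((D (s16mulX hmul (el i) u)) : H →L[ℂ] H))) = _
  rw [← sub_eq_zero, sub_eq_add_neg]
  exact this


/-- Step C0 : product rule for `D` against `δ` -/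
lemma s16C0 (hsum : ∑ i, star (el i : H →L[ℂ] H) * (el i : H →L[ℂ] H) = 1)
    (hder : s16IsTD X D) (x : X) (u : H →L[ℂ] H) :
    ((D (s16mulX hmul x u)) : H →L[ℂ] H)
      = ((D x) : H →L[ℂ] H) * u + (x : H →L[ℂ] H) * s16delta el D hmul u := by
  have hw : ∀ i, ((x : H →L[ℂ] H) * star (el i : H →L[ℂ] H) * ((el i : H →L[ℂ] H) * u)) ∈ X := by
    intro i
    simpa [mul_assoc] using hmul x (star (el i : H →L[ℂ] H) * ((el i : H →L[ℂ] H) * u))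
  set w : ι → X := fun i => ⟨_, hw i⟩ with hwdef
  have hxu : s16mulX hmul x u = ∑ i, w i := by
    refine Subtype.ext ?_
    push_cast [hwdef]
    simp only [mul_assoc, ← Finset.mul_sum]
    rw [s16hsum1 el hsum u]
    rfl
  have hDw : ∀ i, ((D (w i)) : H →L[ℂ] H) =
      ((D x) : H →L[ℂ] H) * star (el i : H →L[ℂ] H) * ((el i : H →L[ℂ] H) * u)
      + (x : H →L[ℂ] H) * star ((D (el i)) : H →L[ℂ] H) * ((el i : H →L[ℂ] H) * u)
      + (x : H →L[ℂ] H) * star (el i : H →L[ℂ] H)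
          * ((D (s16mulX hmul (el i) u)) : H →L[ℂ] H) := by
    intro i
    exact hder x (el i) (s16mulX hmul (el i) u) (w i) rfl
  calc ((D (s16mulX hmul x u)) : H →L[ℂ] H) = ∑ i, ((D (w i)) : H →L[ℂ] H) := by
        rw [hxu, map_sum]; push_cast; rfl
    _ = ∑ i, (((D x) : H →L[ℂ] H) * (star (el i : H →L[ℂ] H) * ((el i : H →L[ℂ] H) * u))
          + (x : H →L[ℂ] H) * (star ((D (el i)) : H →L[ℂ] H) * ((el i : H →L[ℂ] H) * u)
            + star (el i : H →L[ℂ] H) * ((D (s16mulX hmul (el i) u)) : H →L[ℂ] H))) := by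
        refine Finset.sum_congr rfl fun i _ => ?_
        rw [hDw i]
        simp only [mul_add, mul_assoc]
        abel
    _ = ((D x) : H →L[ℂ] H) * u + (x : H →L[ℂ] H) * s16delta el D hmul u := by
        rw [Finset.sum_add_distrib, ← Finset.mul_sum, ← Finset.mul_sum,
          s16hsum1 el hsum u]
        rfl

/-- Step C : `δ` is a derivation -/
lemma s16Leib (hsum : ∑ i, star (el i : H →L[ℂ] H) * (el i : H →L[ℂ] H) = 1)
    (hder : s16IsTD X D) (a b : H →L[ℂ] H) :
    s16delta el D hmul (a * b)
      = s16delta el D hmul a * b + a * s16delta el D hmul b := by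
  have h1 : ∀ i, s16mulX hmul (el i) (a * b) = s16mulX hmul (s16mulX hmul (el i) a) b :=
    fun i => Subtype.ext (mul_assoc _ _ _).symm
  calc s16delta el D hmul (a * b)
      = ∑ i, ((star ((D (el i)) : H →L[ℂ] H) * ((el i : H →L[ℂ] H) * a)
          + star (el i : H →L[ℂ] H) * ((D (s16mulX hmul (el i) a)) : H →L[ℂ] H)) * b
        + star (el i : H →L[ℂ] H) * ((el i : H →L[ℂ] H)
            * (a * s16delta el D hmul b))) := by
        unfold s16delta
        refine Finset.sum_congr rfl fun i _ => ?_
        rw [h1 i, s16C0 el D hmul hsum hder (s16mulX hmul (el i) a) b]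
        simp only [s16coe_mulX, mul_add, add_mul, mul_assoc]
        abel
    _ = (∑ i, (star ((D (el i)) : H →L[ℂ] H) * ((el i : H →L[ℂ] H) * a)
          + star (el i : H →L[ℂ] H) * ((D (s16mulX hmul (el i) a)) : H →L[ℂ] H))) * b
        + ∑ i, star (el i : H →L[ℂ] H) * ((el i : H →L[ℂ] H)
            * (a * s16delta el D hmul b)) := by
        rw [Finset.sum_add_distrib, Finset.sum_mul]
    _ = s16delta el D hmul a * b + a * s16delta el D hmul b := by
        rw [s16hsum1 el hsum]
        rfl

/-- `δ` is a *-map -/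
lemma s16deltaStar (hsum : ∑ i, star (el i : H →L[ℂ] H) * (el i : H →L[ℂ] H) = 1)
    (hder : s16IsTD X D) (u : H →L[ℂ] H) :
    s16delta el D hmul (star u) = star (s16delta el D hmul u) := by
  have hdecomp : ∑ j, star ((s16mulX hmul (el j) u : X) : H →L[ℂ] H) * (el j : H →L[ℂ] H)
      = star u := by
    calc ∑ j, star ((s16mulX hmul (el j) u : X) : H →L[ℂ] H) * (el j : H →L[ℂ] H)
        = star (∑ j, star (el j : H →L[ℂ] H) * ((el j : H →L[ℂ] H) * u)) := by
          rw [star_sum]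
          refine Finset.sum_congr rfl fun j _ => ?_
          rw [star_mul, star_star, s16coe_mulX]
      _ = star u := by rw [s16hsum1 el hsum u]
  rw [s16B el D hmul hsum hder (fun j => s16mulX hmul (el j) u) el (star u) hdecomp]
  unfold s16delta
  rw [star_sum]
  refine Finset.sum_congr rfl fun i _ => ?_
  simp only [star_add, star_mul, star_star, s16coe_mulX, mul_assoc]
  abel

end withD

/-- Step D : the commutation identity for `β` -/
lemma s16K [FiniteDimensional ℂ H] {n : ℕ} (bb : OrthonormalBasis (Fin n) ℂ H) (e : H)
    (δ : (H →L[ℂ] H) →ₗ[ℂ] (H →L[ℂ] H)) (a : H →L[ℂ] H) :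
    ∑ i, a * star (s16rk e (bb i)) * δ (s16rk e (bb i))
      = ∑ i, star (s16rk e (bb i)) * δ (s16rk e (bb i) * a) := by
  have hR : ∀ i, star (s16rk e (bb i)) * δ (s16rk e (bb i) * a)
      = ∑ j, ⟪bb i, a (bb j)⟫_ℂ • (s16rk (bb i) e * δ (s16rk e (bb j))) := by
    intro i
    have harg : s16rk e (bb i) * a = ∑ j,
        (starRingEnd ℂ) (⟪bb j, (ContinuousLinearMap.adjoint a) (bb i)⟫_ℂ) • s16rk e (bb j) := by
      rw [s16rk_mul]
      conv_lhs => rw [← bb.sum_repr' (ContinuousLinearMap.adjoint a (bb i))]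
      rw [s16rk_sum_right]
    rw [s16star_rk, harg, map_sum, Finset.mul_sum]
    refine Finset.sum_congr rfl fun j _ => ?_
    rw [map_smul, mul_smul_comm]
    congr 2
    rw [inner_conj_symm, ContinuousLinearMap.adjoint_inner_left]
  calc ∑ i, a * star (s16rk e (bb i)) * δ (s16rk e (bb i))
      = ∑ j, s16rk (a (bb j)) e * δ (s16rk e (bb j)) := by
        refine Finset.sum_congr rfl fun j _ => ?_
        rw [s16star_rk, s16mul_rk]
    _ = ∑ j, (∑ i, ⟪bb i, a (bb j)⟫_ℂ • s16rk (bb i) e) * δ (s16rk e (bb j)) := by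
        refine Finset.sum_congr rfl fun j _ => ?_
        congr 1
        conv_lhs => rw [← bb.sum_repr' (a (bb j))]
        rw [s16rk_sum_left]
        refine Finset.sum_congr rfl fun i _ => ?_
        rw [s16rk_smul_left]
    _ = ∑ j, ∑ i, ⟪bb i, a (bb j)⟫_ℂ • (s16rk (bb i) e * δ (s16rk e (bb j))) := by
        refine Finset.sum_congr rfl fun j _ => ?_
        rw [Finset.sum_mul]
        refine Finset.sum_congr rfl fun i _ => ?_
        rw [smul_mul_assoc]
    _ = ∑ i, star (s16rk e (bb i)) * δ (s16rk e (bb i) * a) := by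
        rw [Finset.sum_comm]
        exact Finset.sum_congr rfl fun i _ => (hR i).symm

end s16aux

set_option maxHeartbeats 2000000 in
/-- Let `H` be a nonzero finite-dimensional complex Hilbert space and `p ∈ B(H)` an
orthogonal projection.  Then every TRO-derivation of the TRO `X = pB(H)` is an inner
TRO-derivation. -/
theorem stmt_16 {H : Type*}
    [NormedAddCommGroup H] [InnerProductSpace ℂ H] [CompleteSpace H]
    [FiniteDimensional ℂ H] [Nontrivial H]
    (p : H →L[ℂ] H) (hp_idem : p * p = p) (hp_sa : star p = p)
    (X : Submodule ℂ (H →L[ℂ] H)) (hX : X = LinearMap.range (LinearMap.mulLeft ℂ p))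
    (D : X →L[ℂ] X)
    (hder : ∀ x y z w : X,
      (w : H →L[ℂ] H) = (x : H →L[ℂ] H) * star (y : H →L[ℂ] H) * (z : H →L[ℂ] H) →
      (D w : H →L[ℂ] H) =
        (D x : H →L[ℂ] H) * star (y : H →L[ℂ] H) * (z : H →L[ℂ] H)
          + (x : H →L[ℂ] H) * star (D y : H →L[ℂ] H) * (z : H →L[ℂ] H)
          + (x : H →L[ℂ] H) * star (y : H →L[ℂ] H) * (D z : H →L[ℂ] H)) :
    ∃ (n m : ℕ) (a b : Fin n → X) (c d : Fin m → X),
      ∀ x : X, (D x : H →L[ℂ] H) =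
        (∑ i, ((a i : H →L[ℂ] H) * star (b i : H →L[ℂ] H)
            - (b i : H →L[ℂ] H) * star (a i : H →L[ℂ] H))) * (x : H →L[ℂ] H)
        + (x : H →L[ℂ] H) *
          (∑ j, (star (c j : H →L[ℂ] H) * (d j : H →L[ℂ] H)
            - star (d j : H →L[ℂ] H) * (c j : H →L[ℂ] H))) := by
  classical
  have hmemX : ∀ u : H →L[ℂ] H, p * u = u → u ∈ X := by
    intro u h
    rw [hX]
    exact ⟨u, by simpa [LinearMap.mulLeft_apply] using h⟩
  have hXp : ∀ x : X, p * (x : H →L[ℂ] H) = (x : H →L[ℂ] H) := by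
    intro x
    have hx : (x : H →L[ℂ] H) ∈ LinearMap.range (LinearMap.mulLeft ℂ p) := by
      rw [← hX]; exact x.2
    obtain ⟨u, hu⟩ := hx
    simp only [LinearMap.mulLeft_apply] at hu
    rw [← hu, ← mul_assoc, hp_idem]
  by_cases hp0 : p = 0
  · refine ⟨0, 0, Fin.elim0, Fin.elim0, Fin.elim0, Fin.elim0, fun x => ?_⟩
    have h1 : (D x : H →L[ℂ] H) = 0 := by
      have := hXp (D x)
      rw [hp0, zero_mul] at this
      exact this.symm
    simp [h1]
  -- main case
  have hmul : ∀ (x : X) (u : H →L[ℂ] H), (x : H →L[ℂ] H) * u ∈ X := fun x u =>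
    hmemX _ (by rw [← mul_assoc, hXp])
  obtain ⟨v, hv⟩ : ∃ v, p v ≠ 0 := by
    by_contra h
    push_neg at h
    exact hp0 (ContinuousLinearMap.ext fun v => by simp [h v])
  have hppv : p (p v) = p v := by
    have := congrArg (fun q : H →L[ℂ] H => q v) hp_idem
    simpa [ContinuousLinearMap.mul_apply] using this
  set e : H := ((‖p v‖ : ℂ))⁻¹ • p v with he
  have hpe : p e = e := by rw [he, map_smul, hppv]
  have hnv : (‖p v‖ : ℂ) ≠ 0 := by
    exact_mod_cast (norm_ne_zero_iff).mpr hv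
  have hee : ⟪e, e⟫_ℂ = 1 := by
    rw [he, inner_smul_left, inner_smul_right, inner_self_eq_norm_sq_to_K]
    rw [map_inv₀, Complex.conj_ofReal]
    field_simp
    norm_cast
  set bb := stdOrthonormalBasis ℂ H with hbb
  have hel : ∀ i, s16rk e (bb i) ∈ X := fun i => hmemX _ (by rw [s16mul_rk, hpe])
  set el : Fin (Module.finrank ℂ H) → X := fun i => ⟨s16rk e (bb i), hel i⟩ with heldef
  have hcoel : ∀ i, (el i : H →L[ℂ] H) = s16rk e (bb i) := fun i => rfl
  have hsum : ∑ i, star (el i : H →L[ℂ] H) * (el i : H →L[ℂ] H) = 1 := by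
    calc ∑ i, star (el i : H →L[ℂ] H) * (el i : H →L[ℂ] H)
        = ∑ i, s16rk (bb i) (bb i) := by
          refine Finset.sum_congr rfl fun i _ => ?_
          rw [hcoel, s16star_rk, s16rk_comp, hee, one_smul]
      _ = 1 := s16sum_rk_one bb
  have hderD : s16IsTD X D := hder
  have hhalf : star ((1/2 : ℂ)) = (1/2 : ℂ) := by norm_num
  -- β and its commutation property
  set β : H →L[ℂ] H :=
    ∑ i, star (el i : H →L[ℂ] H) * s16delta el D hmul (el i : H →L[ℂ] H) with hβ
  have hβinner : ∀ a : H →L[ℂ] H, s16delta el D hmul a = a * β - β * a := by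
    intro a
    have hK' : (∑ i, a * star (el i : H →L[ℂ] H) * s16delta el D hmul (el i : H →L[ℂ] H))
        = ∑ i, star (el i : H →L[ℂ] H) * s16delta el D hmul ((el i : H →L[ℂ] H) * a) :=
      s16K bb e (s16deltaL el D hmul) a
    have h2 : ∑ i, star (el i : H →L[ℂ] H) * s16delta el D hmul ((el i : H →L[ℂ] H) * a)
        = β * a + s16delta el D hmul a := by
      calc ∑ i, star (el i : H →L[ℂ] H) * s16delta el D hmul ((el i : H →L[ℂ] H) * a)
          = ∑ i, (star (el i : H →L[ℂ] H) * s16delta el D hmul (el i : H →L[ℂ] H) * a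
            + star (el i : H →L[ℂ] H) * ((el i : H →L[ℂ] H) * s16delta el D hmul a)) := by
            refine Finset.sum_congr rfl fun i _ => ?_
            rw [s16Leib el D hmul hsum hderD (el i : H →L[ℂ] H) a, mul_add, mul_assoc]
        _ = (∑ i, star (el i : H →L[ℂ] H) * s16delta el D hmul (el i : H →L[ℂ] H)) * a
            + ∑ i, star (el i : H →L[ℂ] H) * ((el i : H →L[ℂ] H) * s16delta el D hmul a) := by
            rw [Finset.sum_add_distrib, Finset.sum_mul]
        _ = β * a + s16delta el D hmul a := by
            rw [s16hsum1 el hsum, ← hβ]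
    have hab : a * β = β * a + s16delta el D hmul a := by
      calc a * β = ∑ i, a * star (el i : H →L[ℂ] H) * s16delta el D hmul (el i : H →L[ℂ] H) := by
            rw [hβ, Finset.mul_sum]
            exact Finset.sum_congr rfl fun i _ => (mul_assoc _ _ _).symm
        _ = _ := hK'
        _ = β * a + s16delta el D hmul a := h2
    rw [hab]
    abel
  have hδstar : ∀ u, s16delta el D hmul (star u) = star (s16delta el D hmul u) :=
    s16deltaStar el D hmul hsum hderD
  have hstarβ : star β
      = ∑ i, star (s16delta el D hmul (el i : H →L[ℂ] H)) * (el i : H →L[ℂ] H) := by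
    rw [hβ, star_sum]
    refine Finset.sum_congr rfl fun i _ => ?_
    rw [star_mul, star_star]
  set β' : H →L[ℂ] H := (1/2 : ℂ) • (β - star β) with hβ'
  have hβ'inner : ∀ a, s16delta el D hmul a = a * β' - β' * a := by
    intro a
    have h1 := hβinner a
    have h2 : s16delta el D hmul a = star β * a - a * star β := by
      have h3 := hδstar (star a)
      rw [star_star] at h3
      rw [h3, hβinner (star a), star_sub, star_mul, star_mul, star_star]
    rw [hβ', mul_smul_comm, smul_mul_assoc, ← smul_sub]
    have h4 : a * (β - star β) - (β - star β) * a
        = (a * β - β * a) + (star β * a - a * star β) := by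
      rw [mul_sub, sub_mul]
      abel
    rw [h4, ← h1, ← h2, ← two_smul ℂ (s16delta el D hmul a), smul_smul]
    norm_num
  have hβ'skew : star β' = -β' := by
    rw [hβ', star_smul, star_sub, star_star, hhalf, ← smul_neg, neg_sub]
  -- pX and EP
  have hpX : p ∈ X := hmemX p hp_idem
  set pX : X := ⟨p, hpX⟩ with hpXdef
  set EP : H →L[ℂ] H := ((D pX : H →L[ℂ] H)) - p * β' with hEP
  have hB' : ∀ x y : X,
      s16delta el D hmul (star (x : H →L[ℂ] H) * (y : H →L[ℂ] H))
        = star (D x : H →L[ℂ] H) * (y : H →L[ℂ] H)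
          + star (x : H →L[ℂ] H) * (D y : H →L[ℂ] H) := by
    intro x y
    have := s16B el D hmul hsum hderD (fun _ : Fin 1 => x) (fun _ => y)
      (star (x : H →L[ℂ] H) * (y : H →L[ℂ] H)) (by simp)
    simpa using this
  have hE0 : ∀ x y : X,
      star ((D x : H →L[ℂ] H) - (x : H →L[ℂ] H) * β') * (y : H →L[ℂ] H)
        + star (x : H →L[ℂ] H) * ((D y : H →L[ℂ] H) - (y : H →L[ℂ] H) * β') = 0 := by
    intro x y
    have h1 := hB' x y
    have h2 := hβ'inner (star (x : H →L[ℂ] H) * (y : H →L[ℂ] H))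
    calc star ((D x : H →L[ℂ] H) - (x : H →L[ℂ] H) * β') * (y : H →L[ℂ] H)
        + star (x : H →L[ℂ] H) * ((D y : H →L[ℂ] H) - (y : H →L[ℂ] H) * β')
        = (star (D x : H →L[ℂ] H) * (y : H →L[ℂ] H)
            + star (x : H →L[ℂ] H) * (D y : H →L[ℂ] H))
          + (β' * (star (x : H →L[ℂ] H) * (y : H →L[ℂ] H))
            - (star (x : H →L[ℂ] H) * (y : H →L[ℂ] H)) * β') := by
          rw [star_sub, star_mul, hβ'skew, sub_mul, mul_sub]
          simp only [neg_mul, mul_neg, mul_assoc]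
          abel
      _ = s16delta el D hmul (star (x : H →L[ℂ] H) * (y : H →L[ℂ] H))
          + (β' * (star (x : H →L[ℂ] H) * (y : H →L[ℂ] H))
            - (star (x : H →L[ℂ] H) * (y : H →L[ℂ] H)) * β') := by rw [h1]
      _ = 0 := by rw [h2]; abel
  have hpDx : ∀ x : X, p * (D x : H →L[ℂ] H) = (D x : H →L[ℂ] H) := fun x => hXp (D x)
  have hpEP : p * EP = EP := by
    rw [hEP, mul_sub, hpDx pX, ← mul_assoc, hp_idem]
  have hcoep : ((pX : X) : H →L[ℂ] H) = p := rfl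
  have h00 : star EP * p + p * EP = 0 := by
    have h := hE0 pX pX
    rw [hcoep, hp_sa, ← hEP] at h
    exact h
  have hskew1 : star EP * p = -EP := by
    rw [hpEP] at h00
    exact eq_neg_of_add_eq_zero_left h00
  have hstarEP : star EP = -EP := by
    calc star EP = star (p * EP) := by rw [hpEP]
      _ = star EP * star p := by rw [star_mul]
      _ = star EP * p := by rw [hp_sa]
      _ = -EP := hskew1
  have hEPp : EP * p = EP := by
    have h := hskew1
    rw [hstarEP, neg_mul] at h
    exact neg_injective h
  have hEx : ∀ x : X, (D x : H →L[ℂ] H) = EP * (x : H →L[ℂ] H) + (x : H →L[ℂ] H) * β' := by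
    intro x
    have h0 := hE0 x pX
    rw [hcoep, ← hEP] at h0
    have h1 := congrArg star h0
    rw [star_add, star_mul, star_mul, star_star, star_star, star_zero, hp_sa, hstarEP] at h1
    rw [mul_sub, hpDx x, ← mul_assoc, hXp x, neg_mul] at h1
    have h2 : (D x : H →L[ℂ] H) - (x : H →L[ℂ] H) * β' = EP * (x : H →L[ℂ] H) := by
      rw [← sub_eq_zero, sub_eq_add_neg]
      exact h1
    rw [← h2]
    abel
  have hselp : ∀ i, star (el i : H →L[ℂ] H) * p = star (el i : H →L[ℂ] H) := by
    intro i
    have h := congrArg star (hXp (el i))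
    rw [star_mul, hp_sa] at h
    exact h
  -- final assembly
  refine ⟨1, Module.finrank ℂ H,
    (fun _ => (1/2 : ℂ) • (⟨EP, hmemX EP hpEP⟩ : X)),
    (fun _ => pX),
    (fun j => (1/2 : ℂ) • el j),
    (fun j => ⟨p * s16delta el D hmul (el j : H →L[ℂ] H),
      hmemX _ (by rw [← mul_assoc, hp_idem])⟩),
    fun x => ?_⟩
  have hcoeEP : ((⟨EP, hmemX EP hpEP⟩ : X) : H →L[ℂ] H) = EP := rfl
  have hcoed : ∀ j : Fin (Module.finrank ℂ H),
      ((⟨p * s16delta el D hmul (el j : H →L[ℂ] H),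
        hmemX _ (by rw [← mul_assoc, hp_idem])⟩ : X) : H →L[ℂ] H)
      = p * s16delta el D hmul (el j : H →L[ℂ] H) := fun _ => rfl
  simp only [Fin.sum_univ_one, Submodule.coe_smul, hcoeEP, hcoed, hcoep, star_smul, hhalf]
  rw [hEx x]
  have hS1 : (1/2:ℂ) • EP * star p - p * (1/2:ℂ) • star EP = EP := by
    rw [hp_sa, hstarEP, smul_neg, mul_neg, mul_smul_comm, smul_mul_assoc, hEPp, hpEP,
      sub_neg_eq_add, ← add_smul]
    norm_num
  have hterm : ∀ j : Fin (Module.finrank ℂ H),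
      (1/2:ℂ) • star (s16rk e (bb j)) * (p * s16delta el D hmul (s16rk e (bb j))) -
        star (p * s16delta el D hmul (s16rk e (bb j))) * (1/2:ℂ) • s16rk e (bb j)
      = (1/2:ℂ) • (star (el j : H →L[ℂ] H) * s16delta el D hmul (el j : H →L[ℂ] H))
        - (1/2:ℂ) • (star (s16delta el D hmul (el j : H →L[ℂ] H)) * (el j : H →L[ℂ] H)) := by
    intro j
    rw [← hcoel j]
    congr 1
    · rw [smul_mul_assoc, ← mul_assoc, hselp j]
    · rw [mul_smul_comm, star_mul, hp_sa, mul_assoc, hXp (el j)]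
  have hS2 : (∑ j : Fin (Module.finrank ℂ H),
      ((1/2:ℂ) • star (s16rk e (bb j)) * (p * s16delta el D hmul (s16rk e (bb j))) -
        star (p * s16delta el D hmul (s16rk e (bb j))) * (1/2:ℂ) • s16rk e (bb j))) = β' := by
    rw [Finset.sum_congr rfl (fun j _ => hterm j), Finset.sum_sub_distrib,
      ← Finset.smul_sum, ← Finset.smul_sum, ← hβ, ← hstarβ, ← smul_sub, ← hβ']
  rw [hS1, hS2]
end

section
/- Let H be a complex Hilbert space and let p ∈ B(H) be an orthogonal projection (p = p* = p²) that is Murray–von Neumann equivalent to the identity, i.e., there exists u ∈ B(H) with u u* = p and u* u = 1. Then every TRO-derivation of the TRO X = pB(H) = {p x : x ∈ B(H)} is an inner TRO-derivation. -/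
/-- Let `H` be a complex Hilbert space and `p ∈ B(H)` an orthogonal projection that is
Murray–von Neumann equivalent to the identity (`u u* = p`, `u* u = 1` for some `u`).
Then every TRO-derivation of the TRO `X = pB(H)` is an inner TRO-derivation. -/
theorem stmt_17 {H : Type*}
    [NormedAddCommGroup H] [InnerProductSpace ℂ H] [CompleteSpace H]
    (p : H →L[ℂ] H) (hp_idem : p * p = p) (hp_sa : star p = p)
    (u : H →L[ℂ] H) (hu₁ : u * star u = p) (hu₂ : star u * u = 1)
    (X : Submodule ℂ (H →L[ℂ] H)) (hX : X = LinearMap.range (LinearMap.mulLeft ℂ p))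
    (D : X →L[ℂ] X)
    (hder : ∀ x y z w : X,
      (w : H →L[ℂ] H) = (x : H →L[ℂ] H) * star (y : H →L[ℂ] H) * (z : H →L[ℂ] H) →
      (D w : H →L[ℂ] H) =
        (D x : H →L[ℂ] H) * star (y : H →L[ℂ] H) * (z : H →L[ℂ] H)
          + (x : H →L[ℂ] H) * star (D y : H →L[ℂ] H) * (z : H →L[ℂ] H)
          + (x : H →L[ℂ] H) * star (y : H →L[ℂ] H) * (D z : H →L[ℂ] H)) :
    ∃ (n m : ℕ) (a b : Fin n → X) (c d : Fin m → X),
      ∀ x : X, (D x : H →L[ℂ] H) =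
        (∑ i, ((a i : H →L[ℂ] H) * star (b i : H →L[ℂ] H)
            - (b i : H →L[ℂ] H) * star (a i : H →L[ℂ] H))) * (x : H →L[ℂ] H)
        + (x : H →L[ℂ] H) *
          (∑ j, (star (c j : H →L[ℂ] H) * (d j : H →L[ℂ] H)
            - star (d j : H →L[ℂ] H) * (c j : H →L[ℂ] H))) := by
  by_cases hsub : Subsingleton (H →L[ℂ] H)
  · exact ⟨0, 0, 0, 0, 0, 0, fun x => Subsingleton.elim _ _⟩
  have hntH : Nontrivial H := by
    by_contra hnt
    have : Subsingleton H := not_nontrivial_iff_subsingleton.mp hnt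
    exact hsub ⟨fun f g => by ext v; exact Subsingleton.elim _ _⟩
  obtain ⟨ξ0, hξ0⟩ := exists_ne (0 : H)
  have hξ : ‖(‖ξ0‖⁻¹ • ξ0 : H)‖ = 1 := by
    rw [norm_smul, norm_inv, norm_norm, inv_mul_cancel₀ (norm_ne_zero_iff.2 hξ0)]
  set ξ : H := ‖ξ0‖⁻¹ • ξ0 with hξdef
  clear_value ξ
  clear hξdef hξ0 ξ0
  have hmem : ∀ b : H →L[ℂ] H, p * b = b → b ∈ X := by
    intro b hb; rw [hX]; exact ⟨b, hb⟩
  have hpx : ∀ x : X, p * (x : H →L[ℂ] H) = x := by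
    rintro ⟨x, hx⟩; rw [hX] at hx; obtain ⟨y, rfl⟩ := hx
    simp only [LinearMap.mulLeft_apply, ← mul_assoc, hp_idem]
  have hpu : p * u = u := by rw [← hu₁, mul_assoc, hu₂, mul_one]
  have huu : ∀ k : H →L[ℂ] H, star u * (u * k) = k := fun k => by
    rw [← mul_assoc, hu₂, one_mul]
  have hJmem : ∀ m : H →L[ℂ] H, u * m ∈ X := fun m =>
    hmem _ (by rw [← mul_assoc, hpu])
  set JL : (H →L[ℂ] H) →L[ℂ] X :=
    (ContinuousLinearMap.mul ℂ (H →L[ℂ] H) u).codRestrict X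
      (fun m => hJmem m) with hJL
  have hJap : ∀ m, ((JL m : X) : H →L[ℂ] H) = u * m := fun m => rfl
  -- the transferred TRO-derivation δ on B(H)
  set δ : (H →L[ℂ] H) → (H →L[ℂ] H) := fun m => star u * (D (JL m) : H →L[ℂ] H)
    with hδdef
  have hδ : ∀ m n k : H →L[ℂ] H,
      δ (m * star n * k) = δ m * star n * k + m * star (δ n) * k + m * star n * δ k := by
    intro m n k
    have key := hder (JL m) (JL n) (JL k) (JL (m * star n * k)) (by
      simp only [hJap, star_mul, mul_assoc, huu])
    have : δ (m * star n * k) = star u * ((D (JL m) : H →L[ℂ] H) * star (u * n) * (u * k)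
        + (u * m) * star ((D (JL n) : H →L[ℂ] H)) * (u * k)
        + (u * m) * star (u * n) * (D (JL k) : H →L[ℂ] H)) := by
      rw [hδdef]; dsimp only; rw [key]; simp only [hJap]
    rw [this]
    simp only [hδdef, star_mul, star_star, mul_add, mul_assoc, huu]
  -- t = δ(1) is skew
  set t : H →L[ℂ] H := δ 1 with htdef
  have ht : star t = -t := by
    have h := hδ 1 1 1
    simp only [star_one, mul_one, one_mul] at h
    have h2 : δ 1 + (star (δ 1) + δ 1) = δ 1 + 0 := by
      rw [add_zero, ← add_assoc]; exact h.symm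
    exact eq_neg_of_add_eq_zero_left (add_left_cancel h2)
  -- d is an ordinary *-derivation of B(H)
  set d : (H →L[ℂ] H) → (H →L[ℂ] H) := fun m => δ m - m * t with hddef
  have hdle : ∀ m k : H →L[ℂ] H, d (m * k) = d m * k + m * d k := by
    intro m k
    have h := hδ m 1 k
    simp only [star_one, mul_one, one_mul, ← htdef, ht] at h
    simp only [hddef]
    rw [h]
    noncomm_ring
  have hdst : ∀ m : H →L[ℂ] H, d (star m) = star (d m) := by
    intro m
    have h := hδ 1 m 1
    simp only [star_one, mul_one, one_mul] at h
    simp only [hddef, star_sub, star_mul, ht]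
    rw [h]
    noncomm_ring
  -- bundled version of d, to get continuity of T
  set ddL : (H →L[ℂ] H) →L[ℂ] (H →L[ℂ] H) :=
    (ContinuousLinearMap.mul ℂ (H →L[ℂ] H) (star u)).comp
      ((X.subtypeL).comp (D.comp JL))
      - (ContinuousLinearMap.mul ℂ (H →L[ℂ] H)).flip t with hddL
  have hddLap : ∀ m, ddL m = d m := fun m => rfl
  -- rank one operators
  set θ : H →L[ℂ] (H →L[ℂ] H) :=
    ContinuousLinearMap.smulRightL ℂ H H (innerSL ℂ ξ) with hθdef
  have hθap : ∀ η v : H, θ η v = (inner ℂ ξ v : ℂ) • η := fun η v => rfl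
  have hθmul : ∀ (m : H →L[ℂ] H) (η : H), θ (m η) = m * θ η := by
    intro m η; ext v
    simp [hθap, ContinuousLinearMap.mul_apply, map_smul]
  have hinner : (inner ℂ ξ ξ : ℂ) = 1 := by
    rw [inner_self_eq_norm_sq_to_K, hξ]; norm_num
  have hθξ : ∀ η : H, θ η ξ = η := by
    intro η; rw [hθap, hinner, one_smul]
  -- T implements d as a commutator
  set T : H →L[ℂ] H := (ContinuousLinearMap.apply ℂ H ξ).comp (ddL.comp θ) with hTdef
  have hTap : ∀ η, T η = d (θ η) ξ := by
    intro η; simp [hTdef, hddLap]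
  have hdT : ∀ m : H →L[ℂ] H, d m = T * m - m * T := by
    intro m; ext η
    have h1 : T (m η) = d m η + m (T η) := by
      rw [hTap, hθmul, hdle]
      simp [hθξ, hTap]
    simp [ContinuousLinearMap.mul_apply, h1]
  -- skew-adjoint implementing operator g
  set g : H →L[ℂ] H := (2:ℂ)⁻¹ • (T - star T) with hgdef
  have hstar2 : star ((2:ℂ)⁻¹) = (2:ℂ)⁻¹ := by norm_num
  have hgskew : star g = -g := by
    rw [hgdef, star_smul, hstar2, star_sub, star_star, ← neg_sub T (star T), smul_neg]
  have hTs : ∀ m : H →L[ℂ] H, star T * m - m * star T = -(d m) := by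
    intro m
    have h1 : d m = star (d (star m)) := by rw [← hdst, star_star]
    rw [hdT (star m)] at h1
    rw [h1]
    simp only [star_sub, star_mul, star_star]
    abel
  have hdg : ∀ m : H →L[ℂ] H, d m = g * m - m * g := by
    intro m
    have h1 : g * m - m * g
        = (2:ℂ)⁻¹ • ((T * m - m * T) - (star T * m - m * star T)) := by
      simp only [hgdef, smul_mul_assoc, mul_smul_comm, sub_mul, mul_sub, smul_sub]
      abel
    rw [h1, ← hdT m, hTs m, sub_neg_eq_add, ← two_smul ℂ (d m), smul_smul]
    norm_num
  -- the final formula  D x = α x + x β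
  set α : H →L[ℂ] H := u * g * star u with hαdef
  set β : H →L[ℂ] H := t - g with hβdef
  have hαskew : star α = -α := by
    rw [hαdef]
    simp only [star_mul, star_star, hgskew]
    noncomm_ring
  have hβskew : star β = -β := by
    rw [hβdef, star_sub, ht, hgskew]; abel
  have hform : ∀ x : X, (D x : H →L[ℂ] H) = α * x + x * β := by
    intro x
    have hJx : JL (star u * (x : H →L[ℂ] H)) = x := by
      apply Subtype.ext
      rw [hJap, ← mul_assoc, hu₁]
      exact hpx x
    have hum : u * (star u * (x : H →L[ℂ] H)) = (x : H →L[ℂ] H) := by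
      rw [← mul_assoc, hu₁]; exact hpx x
    have hDx : (D x : H →L[ℂ] H) = u * δ (star u * (x : H →L[ℂ] H)) := by
      simp only [hδdef, hJx]
      rw [← mul_assoc, hu₁]
      exact (hpx (D x)).symm
    have hδm : δ (star u * (x : H →L[ℂ] H))
        = d (star u * (x : H →L[ℂ] H)) + (star u * (x : H →L[ℂ] H)) * t := by
      simp only [hddef]
      rw [sub_add_cancel]
    have e1 : α * (x : H →L[ℂ] H) = u * (g * (star u * (x : H →L[ℂ] H))) := by
      rw [hαdef, mul_assoc, mul_assoc]
    have e2 : u * ((star u * (x : H →L[ℂ] H)) * g) = (x : H →L[ℂ] H) * g := by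
      rw [← mul_assoc, hum]
    have e3 : u * ((star u * (x : H →L[ℂ] H)) * t) = (x : H →L[ℂ] H) * t := by
      rw [← mul_assoc, hum]
    rw [hDx, hδm, hdg, mul_add, mul_sub, e2, e3, e1, hβdef, mul_sub]
    abel
  -- memberships of the witnesses
  have hup : star u * p = star u := by
    rw [← hp_sa, ← star_mul, hpu]
  have hαp : α * p = α := by
    rw [hαdef, mul_assoc (u * g) (star u) p, hup]
  have hpα : p * α = α := by
    rw [hαdef]; simp only [← mul_assoc, hpu]
  have hA : ((2:ℂ)⁻¹ • α) * star p - p * star ((2:ℂ)⁻¹ • α) = α := by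
    rw [hp_sa, star_smul, hstar2, hαskew, smul_neg, mul_neg, sub_neg_eq_add,
      smul_mul_assoc, mul_smul_comm, hαp, hpα, ← two_smul ℂ, smul_smul]
    norm_num
  have hB : star u * ((2:ℂ)⁻¹ • (u * β)) - star ((2:ℂ)⁻¹ • (u * β)) * u = β := by
    rw [star_smul, hstar2, star_mul, mul_smul_comm, smul_mul_assoc, huu,
      mul_assoc (star β) (star u) u, hu₂, mul_one, hβskew, smul_neg, sub_neg_eq_add,
      ← two_smul ℂ, smul_smul]
    norm_num
  refine ⟨1, 1,
    (fun _ => ⟨(2:ℂ)⁻¹ • α, hmem _ ?_⟩), (fun _ => ⟨p, hmem _ hp_idem⟩),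
    (fun _ => ⟨u, hmem _ hpu⟩), (fun _ => ⟨(2:ℂ)⁻¹ • (u * β), hmem _ ?_⟩), ?_⟩
  · rw [mul_smul_comm, hpα]
  · rw [mul_smul_comm, ← mul_assoc, hpu]
  · intro x
    rw [hform x]
    simp only [Fin.sum_univ_one]
    rw [hA, hB]
end
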